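/- Let 1 ≤ n ≤ d be integers, C₀ ≥ 1 and c₁ > 0. There exist constants γ₀ ∈ (0,1) and C > 0, depending only on n, d, C₀ and c₁, with the following property. Let μ be a Radon measure on ℝ^d and B = B(z,r) a ball with μ(B) > 0 and μ(3.3B) ≤ C₀ μ(B), and suppose that some pair (c, L) with c ≥ 0 and L an affine n-plane intersecting 0.9B attains the infimum defining α_μ(1.1B). Let 0 < γ ≤ γ₀ and suppose there is a countable family of balls {B_i}_{i∈I}, each of radius 4γr and centered at a point of B, such that the balls {10B_i}_{i∈I} are pairwise disjoint, Σ_{i∈I} μ(B_i) ≥ c₁ μ(B), and Θ_μ(B_i) ≥ c₁ γ^{-1} Θ_μ(B) for every i ∈ I. Then α_μ(1.1B) > Cγ. -/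

import Mathlib

open MeasureTheory Metric Set

noncomputable section

abbrev Euc (d : ℕ) : Type := EuclideanSpace ℝ (Fin d)

/-- An affine `n`-plane: a nonempty affine subspace whose direction has dimension `n`. -/
def IsAffinePlane {d : ℕ} (n : ℕ) (L : AffineSubspace ℝ (Euc d)) : Prop :=
  (L : Set (Euc d)).Nonempty ∧ Module.finrank ℝ L.direction = n

/-- The quantity inside the infimum defining `β_{μ,p}(x,r)`, for a given plane `L`. -/
noncomputable def betaVal {d : ℕ} (p : ℝ) (μ : Measure (Euc d)) (x : Euc d) (r : ℝ)
    (L : AffineSubspace ℝ (Euc d)) : ℝ :=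
  ((μ (ball x (3 * r))).toReal⁻¹ *
    ∫ y in ball x r, (Metric.infDist y (L : Set (Euc d)) / r) ^ p ∂μ) ^ (1 / p)

/-- The coefficient `β_{μ,p}(x,r)`: the infimum is over affine `n`-planes meeting `B(x,r)`. -/
noncomputable def betaCoef {d : ℕ} (n : ℕ) (p : ℝ) (μ : Measure (Euc d)) (x : Euc d)
    (r : ℝ) : ℝ :=
  sInf { b | ∃ L : AffineSubspace ℝ (Euc d), IsAffinePlane n L ∧
    ((L : Set (Euc d)) ∩ ball x r).Nonempty ∧ b = betaVal p μ x r L }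

/-- `Lip₁(B)`: 1-Lipschitz functions supported inside `B`. -/
def Lip1 {d : ℕ} (B : Set (Euc d)) : Set (Euc d → ℝ) :=
  { φ | LipschitzWith 1 φ ∧ tsupport φ ⊆ B }

/-- `F_B(μ,ν) = sup { |∫φ dμ − ∫φ dν| : φ ∈ Lip₁(B) }`. -/
noncomputable def Fdist {d : ℕ} (B : Set (Euc d)) (μ ν : Measure (Euc d)) : ℝ :=
  sSup { t | ∃ φ ∈ Lip1 B, t = |(∫ x, φ x ∂μ) - ∫ x, φ x ∂ν| }

/-- The flat measure `c · H^n|_L`. -/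
noncomputable def flatMeasure {d : ℕ} (n : ℕ) (c : ℝ) (L : AffineSubspace ℝ (Euc d)) :
    Measure (Euc d) :=
  ENNReal.ofReal c • (μH[(n : ℝ)]).restrict (L : Set (Euc d))

/-- The quantity inside the infimum defining `α_μ(x,r)`, for a given `c ≥ 0` and plane `L`. -/
noncomputable def alphaVal {d : ℕ} (n : ℕ) (μ : Measure (Euc d)) (x : Euc d) (r : ℝ)
    (c : ℝ) (L : AffineSubspace ℝ (Euc d)) : ℝ :=
  Fdist (ball x r) μ (flatMeasure n c L) / (r * (μ (ball x (3 * r))).toReal)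

/-- The coefficient `α_μ(x,r)`. -/
noncomputable def alphaCoef {d : ℕ} (n : ℕ) (μ : Measure (Euc d)) (x : Euc d) (r : ℝ) : ℝ :=
  sInf { a | ∃ c : ℝ, 0 ≤ c ∧ ∃ L : AffineSubspace ℝ (Euc d), IsAffinePlane n L ∧
    a = alphaVal n μ x r c L }

/-- `μ` is `n`-rectifiable: `μ ≪ H^n` and `μ`-a.a. of the space is covered by countably
many Lipschitz images of `ℝ^n`. -/
def IsNRectifiable {d : ℕ} (n : ℕ) (μ : Measure (Euc d)) : Prop :=
  μ ≪ μH[(n : ℝ)] ∧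
  ∃ f : ℕ → Euc n → Euc d,
    (∀ i, ∃ K : NNReal, LipschitzWith K (f i)) ∧
    μ (Set.univ \ ⋃ i, Set.range (f i)) = 0

/-- The `n`-dimensional density `Θ_μ(B) = μ(B)/r(B)^n` of a ball `B = B(x,r)`. -/
noncomputable def density {d : ℕ} (n : ℕ) (μ : Measure (Euc d)) (x : Euc d) (r : ℝ) : ℝ :=
  (μ (ball x r)).toReal / r ^ n


/-!
Let `ν = c·H^n|_L` be the minimizing flat measure. Since `(0, L)` competes with `(c, L)`,
`F_{1.1B}(μ, ν) ≲ r μ(3.3B)`, and testing `ν - μ` against a tent around a point of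
`L ∩ 0.9B` turns this into `c ≲ μ(3.3B)/r^n`. Hence `ν(2B_i) ≲ γ^n μ(3.3B)`, while the density
assumption gives `μ(B_i) ≳ γ^{n-1} μ(B)`; for small `γ` this means `ν(2B_i) ≤ μ(B_i)/2`.
Testing `μ - ν` against the sum of tents on the disjoint balls `B_i` (still 1-Lipschitz) gives
`F_{1.1B}(μ, ν) ≳ γ r Σ μ(B_i) ≳ γ r μ(B)`, that is `α_μ(1.1B) ≳ γ`.
-/

open scoped ENNReal NNReal
open Module

theorem hausdorffMeasure_inter_ball_of_mem {E : Type*} [NormedAddCommGroup E]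
    [InnerProductSpace ℝ E] [FiniteDimensional ℝ E] [MeasurableSpace E] [BorelSpace E]
    {n : ℕ} {L : AffineSubspace ℝ E} (hL : finrank ℝ L.direction = n) {p : E}
    (hp : p ∈ L) (ρ : ℝ) :
    μH[(n : ℝ)] ((L : Set E) ∩ ball p ρ) = μH[(n : ℝ)] (ball (0 : Euc n) ρ) := by
  have : Nonempty L := ⟨⟨p, hp⟩⟩
  let e : L ≃ᵢ Euc n := (IsometryEquiv.vaddConst (⟨p, hp⟩ : L)).symm.trans
    ((stdOrthonormalBasis ℝ L.direction).reindex (finCongr hL)).repr.toIsometryEquiv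
  have he : e ⟨p, hp⟩ = 0 := by simp [e]
  have himage : (L : Set E) ∩ ball p ρ = Subtype.val '' ball (⟨p, hp⟩ : L) ρ := by
    ext y
    constructor
    · rintro ⟨hyL, hy⟩
      exact ⟨⟨y, hyL⟩, hy, rfl⟩
    · rintro ⟨y, hy, rfl⟩
      exact ⟨y.2, hy⟩
  rw [himage, isometry_subtype_coe.hausdorffMeasure_image (Or.inl (Nat.cast_nonneg n)),
    ← e.isometry.hausdorffMeasure_image (Or.inl (Nat.cast_nonneg n)), e.image_ball, he]

section FlatMeasure

variable {d n : ℕ} {c : ℝ} {L : AffineSubspace ℝ (Euc d)}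

theorem flatMeasure_ball_of_mem (hL : finrank ℝ L.direction = n) {p : Euc d} (hp : p ∈ L)
    (ρ : ℝ) :
    flatMeasure n c L (ball p ρ) = ENNReal.ofReal c * μH[(n : ℝ)] (ball (0 : Euc n) ρ) := by
  rw [flatMeasure, Measure.smul_apply, Measure.restrict_apply measurableSet_ball, inter_comm,
    hausdorffMeasure_inter_ball_of_mem hL hp, smul_eq_mul]

theorem flatMeasure_ball_le (hL : finrank ℝ L.direction = n) {q : Euc d} (hq : q ∈ L) {s : ℝ}
    (hs : 0 < s) (x : Euc d) (ρ : ℝ) :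
    flatMeasure n c L (ball x ρ) ≤
      ENNReal.ofReal ((2 * ρ / s) ^ n) * flatMeasure n c L (ball q s) := by
  rcases ((L : Set (Euc d)) ∩ ball x ρ).eq_empty_or_nonempty with hempty | ⟨p, hpL, hpx⟩
  · rw [flatMeasure, Measure.smul_apply, Measure.restrict_apply measurableSet_ball, inter_comm,
      hempty, measure_empty, smul_zero]
    exact zero_le
  have hρ : 0 < ρ := pos_of_mem_ball hpx
  calc flatMeasure n c L (ball x ρ) ≤ flatMeasure n c L (ball p (2 * ρ)) :=
        measure_mono (ball_subset_ball' (by rw [mem_ball'] at hpx; linarith))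
    _ = ENNReal.ofReal ((2 * ρ / s) ^ n) * flatMeasure n c L (ball q s) := by
        have hscale := Measure.addHaar_ball_mul_of_pos μH[(n : ℝ)] (0 : Euc n)
          (div_pos (mul_pos two_pos hρ) hs) s
        rw [div_mul_cancel₀ _ hs.ne', finrank_euclideanSpace_fin] at hscale
        rw [flatMeasure_ball_of_mem hL hpL, flatMeasure_ball_of_mem hL hq, hscale]
        ring

theorem flatMeasure_ball_lt_top (hL : IsAffinePlane n L) (x : Euc d) (ρ : ℝ) :
    flatMeasure n c L (ball x ρ) < ⊤ := by
  obtain ⟨q, hq⟩ := hL.1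
  refine (flatMeasure_ball_le hL.2 hq one_pos x ρ).trans_lt
    (ENNReal.mul_lt_top ENNReal.ofReal_lt_top ?_)
  rw [flatMeasure_ball_of_mem hL.2 hq]
  exact ENNReal.mul_lt_top ENNReal.ofReal_lt_top measure_ball_lt_top

end FlatMeasure

section Tent

variable {X : Type*} [PseudoMetricSpace X] {a : ℝ}

def tent (a : ℝ) (p y : X) : ℝ := max 0 (min a (2 * a - dist y p))

theorem tent_nonneg (a : ℝ) (p y : X) : 0 ≤ tent a p y := le_max_left _ _

theorem tent_le (ha : 0 ≤ a) (p y : X) : tent a p y ≤ a := max_le ha (min_le_left _ _)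

theorem tent_of_dist_lt (ha : 0 ≤ a) {p y : X} (h : dist y p < a) : tent a p y = a := by
  rw [tent, min_eq_left (by linarith), max_eq_right ha]

theorem support_tent_subset (a : ℝ) (p : X) :
    Function.support (tent a p) ⊆ ball p (2 * a) := by
  intro y hy
  by_contra h
  rw [mem_ball, not_lt] at h
  exact hy (max_eq_left ((min_le_right _ _).trans (by linarith)))

theorem lipschitzWith_tent (a : ℝ) (p : X) : LipschitzWith 1 (tent a p) := by
  have : LipschitzWith 1 fun y => 2 * a - dist y p := by
    simpa using (LipschitzWith.const (2 * a)).sub (LipschitzWith.dist_left p)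
  exact (this.const_min a).const_max 0

variable [MeasurableSpace X] [OpensMeasurableSpace X] {μ : Measure X} {p : X}

theorem integrable_tent (ha : 0 ≤ a) (hμ : μ (ball p (2 * a)) ≠ ⊤) :
    Integrable (tent a p) μ := by
  rw [← indicator_eq_self.2 (support_tent_subset a p),
    integrable_indicator_iff measurableSet_ball]
  refine Measure.integrableOn_of_bounded (M := a) hμ
    (lipschitzWith_tent a p).continuous.aestronglyMeasurable (.of_forall fun y => ?_)
  rw [Real.norm_of_nonneg (tent_nonneg a p y)]
  exact tent_le ha p y

theorem integral_tent_le (ha : 0 ≤ a) (hμ : μ (ball p (2 * a)) ≠ ⊤) :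
    ∫ y, tent a p y ∂μ ≤ a * (μ (ball p (2 * a))).toReal := by
  calc ∫ y, tent a p y ∂μ ≤ ∫ y, (ball p (2 * a)).indicator (fun _ => a) y ∂μ := by
        refine integral_mono (integrable_tent ha hμ)
          ((integrable_indicator_iff measurableSet_ball).2 (integrableOn_const hμ)) ?_
        intro y
        by_cases hy : y ∈ ball p (2 * a)
        · rw [indicator_of_mem hy]
          exact tent_le ha p y
        · rw [indicator_of_notMem hy,
            Function.notMem_support.1 fun h => hy (support_tent_subset a p h)]
    _ = a * (μ (ball p (2 * a))).toReal := by
        rw [integral_indicator_const _ measurableSet_ball, smul_eq_mul, mul_comm]; rfl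

theorem mul_measure_ball_le_integral_tent (ha : 0 ≤ a) (hμ : μ (ball p (2 * a)) ≠ ⊤) :
    a * (μ (ball p a)).toReal ≤ ∫ y, tent a p y ∂μ := by
  have hμa : μ (ball p a) ≠ ⊤ :=
    ne_top_of_le_ne_top hμ (measure_mono (ball_subset_ball (by linarith)))
  calc a * (μ (ball p a)).toReal = ∫ y, (ball p a).indicator (fun _ => a) y ∂μ := by
        rw [integral_indicator_const _ measurableSet_ball, smul_eq_mul, mul_comm]; rfl
    _ ≤ ∫ y, tent a p y ∂μ :=
        integral_mono ((integrable_indicator_iff measurableSet_ball).2 (integrableOn_const hμa))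
          (integrable_tent ha hμ)
          (indicator_le' (fun y hy => (tent_of_dist_lt ha hy).ge) fun y _ => tent_nonneg a p y)

end Tent

theorem LipschitzWith.sum_of_pairwiseDisjoint_support {α ι : Type*} [PseudoMetricSpace α]
    {K : ℝ≥0} {J : Finset ι} {f : ι → α → ℝ} (hf : ∀ i ∈ J, LipschitzWith K (f i))
    (hf₀ : ∀ i ∈ J, 0 ≤ f i)
    (hdisj : (J : Set ι).PairwiseDisjoint fun i => Function.support (f i)) :
    LipschitzWith K fun y => ∑ i ∈ J, f i y := by
  refine LipschitzWith.of_le_add_mul K fun y y' => ?_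
  by_cases hy : ∃ i ∈ J, f i y ≠ 0
  · obtain ⟨i, hi, hyi⟩ := hy
    have hsum : ∑ j ∈ J, f j y = f i y := Finset.sum_eq_single_of_mem i hi fun j hj hji => by
      by_contra hyj
      exact Set.disjoint_left.1 (hdisj hj hi hji) hyj hyi
    have hle : f i y' ≤ ∑ j ∈ J, f j y' := Finset.single_le_sum (fun j hj => hf₀ j hj y') hi
    have hlip : f i y ≤ f i y' + K * dist y y' := by
      linarith [le_abs_self (f i y - f i y'), (hf i hi).dist_le_mul y y',
        Real.dist_eq (f i y) (f i y')]
    linarith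
  · push Not at hy
    rw [Finset.sum_eq_zero hy]
    have := Finset.sum_nonneg fun j hj => hf₀ j hj y'
    positivity

section Lip1

variable {d : ℕ} {z : Euc d} {R : ℝ} {φ : Euc d → ℝ}

theorem mem_Lip1_of_support_subset {B K : Set (Euc d)} (hφ : LipschitzWith 1 φ)
    (hsupp : Function.support φ ⊆ K) (hK : IsClosed K) (hKB : K ⊆ B) : φ ∈ Lip1 B :=
  ⟨hφ, (closure_minimal hsupp hK).trans hKB⟩

variable [Nontrivial (Euc d)]

theorem abs_le_of_mem_Lip1 (hR : 0 ≤ R) (hφ : φ ∈ Lip1 (ball z R)) (x : Euc d) :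
    |φ x| ≤ 2 * R := by
  by_cases hx : x ∈ ball z R
  · obtain ⟨w, hw⟩ := (NormedSpace.sphere_nonempty (x := z)).2 hR
    have hφw : φ w = 0 := image_eq_zero_of_notMem_tsupport fun h => by
      simpa [mem_sphere.1 hw] using hφ.2 h
    calc |φ x| = dist (φ x) (φ w) := by rw [hφw, Real.dist_0_eq_abs]
      _ ≤ dist x w := by simpa using hφ.1.dist_le_mul x w
      _ ≤ dist x z + dist w z := dist_triangle_right x w z
      _ ≤ 2 * R := by linarith [mem_ball.1 hx, mem_sphere.1 hw]
  · rw [image_eq_zero_of_notMem_tsupport fun h => hx (hφ.2 h), abs_zero]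
    positivity

theorem abs_integral_le_of_mem_Lip1 (hR : 0 ≤ R) (hφ : φ ∈ Lip1 (ball z R))
    {ν : Measure (Euc d)} (hν : ν (ball z R) ≠ ⊤) :
    |∫ x, φ x ∂ν| ≤ 2 * R * (ν (ball z R)).toReal := by
  rw [← indicator_eq_self.2 ((subset_tsupport φ).trans hφ.2),
    integral_indicator measurableSet_ball, ← Real.norm_eq_abs]
  exact norm_setIntegral_le_of_norm_le_const hν.lt_top fun x _ => abs_le_of_mem_Lip1 hR hφ x

end Lip1

section Fdist

variable {d : ℕ}

theorem Fdist_nonneg (B : Set (Euc d)) (μ ν : Measure (Euc d)) : 0 ≤ Fdist B μ ν :=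
  Real.sSup_nonneg (by rintro t ⟨φ, -, rfl⟩; exact abs_nonneg _)

theorem Fdist_comm (B : Set (Euc d)) (μ ν : Measure (Euc d)) : Fdist B μ ν = Fdist B ν μ := by
  simp only [Fdist, abs_sub_comm]

variable [Nontrivial (Euc d)] {z : Euc d} {R : ℝ} {μ ν : Measure (Euc d)}

theorem abs_sub_integral_le_Fdist (hR : 0 ≤ R) (hμ : μ (ball z R) ≠ ⊤) (hν : ν (ball z R) ≠ ⊤)
    {ψ : Euc d → ℝ} (hψ : ψ ∈ Lip1 (ball z R)) :
    |(∫ x, ψ x ∂μ) - ∫ x, ψ x ∂ν| ≤ Fdist (ball z R) μ ν := by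
  refine le_csSup ⟨2 * R * (μ (ball z R)).toReal + 2 * R * (ν (ball z R)).toReal, ?_⟩
    ⟨ψ, hψ, rfl⟩
  rintro t ⟨φ, hφ, rfl⟩
  exact (abs_sub _ _).trans (add_le_add (abs_integral_le_of_mem_Lip1 hR hφ hμ)
    (abs_integral_le_of_mem_Lip1 hR hφ hν))

theorem Fdist_zero_right_le (hR : 0 ≤ R) (hμ : μ (ball z R) ≠ ⊤) :
    Fdist (ball z R) μ 0 ≤ 2 * R * (μ (ball z R)).toReal := by
  refine Real.sSup_le ?_ (by positivity)
  rintro t ⟨φ, hφ, rfl⟩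
  simpa using abs_integral_le_of_mem_Lip1 hR hφ hμ

end Fdist

section Alpha

variable {d n : ℕ} {μ : Measure (Euc d)} {x : Euc d} {r c : ℝ} {L : AffineSubspace ℝ (Euc d)}

theorem alphaVal_nonneg (hr : 0 ≤ r) : 0 ≤ alphaVal n μ x r c L :=
  div_nonneg (Fdist_nonneg _ _ _) (by positivity)

theorem alphaCoef_le_alphaVal (hr : 0 ≤ r) (hc : 0 ≤ c) (hL : IsAffinePlane n L) :
    alphaCoef n μ x r ≤ alphaVal n μ x r c L :=
  csInf_le ⟨0, by rintro _ ⟨c', -, L', -, rfl⟩; exact alphaVal_nonneg hr⟩ ⟨c, hc, L, hL, rfl⟩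

theorem Fdist_flatMeasure_le_of_alphaVal_eq_alphaCoef [Nontrivial (Euc d)] (hr : 0 < r)
    (hL : IsAffinePlane n L) (hμ : 0 < μ (ball x (3 * r))) (hμ' : μ (ball x (3 * r)) ≠ ⊤)
    (hmin : alphaVal n μ x r c L = alphaCoef n μ x r) :
    Fdist (ball x r) μ (flatMeasure n c L) ≤ 2 * r * (μ (ball x r)).toReal := by
  have hle : alphaVal n μ x r c L ≤ alphaVal n μ x r 0 L :=
    hmin ▸ alphaCoef_le_alphaVal hr.le le_rfl hL
  have hflat : flatMeasure n 0 L = 0 := by simp [flatMeasure]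
  rw [alphaVal, alphaVal, hflat, div_le_div_iff_of_pos_right
    (mul_pos hr (ENNReal.toReal_pos hμ.ne' hμ'))] at hle
  exact hle.trans (Fdist_zero_right_le hr.le
    (ne_top_of_le_ne_top hμ' (measure_mono (ball_subset_ball (by linarith)))))

end Alpha

/-- Testing `μ - ν` against a sum of tents with disjoint supports. -/
theorem mul_sum_measure_ball_sub_le_Fdist {d : ℕ} [Nontrivial (Euc d)] {μ ν : Measure (Euc d)}
    {z : Euc d} {R : ℝ} (hR : 0 ≤ R) (hμ : μ (ball z R) ≠ ⊤) (hν : ν (ball z R) ≠ ⊤)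
    {ι : Type*} (J : Finset ι) (x : ι → Euc d) {a : ℝ} (ha : 0 ≤ a)
    (hdisj : (J : Set ι).PairwiseDisjoint fun i => ball (x i) (2 * a))
    (hsub : ∀ i ∈ J, closedBall (x i) (2 * a) ⊆ ball z R) :
    a * ∑ i ∈ J, ((μ (ball (x i) a)).toReal - (ν (ball (x i) (2 * a))).toReal) ≤
      Fdist (ball z R) μ ν := by
  have hfin : ∀ {m : Measure (Euc d)}, m (ball z R) ≠ ⊤ → ∀ i ∈ J, m (ball (x i) (2 * a)) ≠ ⊤ :=
    fun hm i hi => ne_top_of_le_ne_top hm (measure_mono (ball_subset_closedBall.trans (hsub i hi)))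
  have hψ : (fun y => ∑ i ∈ J, tent a (x i) y) ∈ Lip1 (ball z R) := by
    refine mem_Lip1_of_support_subset
      (LipschitzWith.sum_of_pairwiseDisjoint_support (fun i _ => lipschitzWith_tent a (x i))
        (fun i _ => tent_nonneg a (x i))
        (hdisj.mono fun i => support_tent_subset a (x i)))
      ((Finset.support_sum J _).trans (iUnion₂_mono fun i _ =>
        (support_tent_subset a (x i)).trans ball_subset_closedBall))
      (J.finite_toSet.isClosed_biUnion fun i _ => isClosed_closedBall) (iUnion₂_subset hsub)
  have hμψ : a * ∑ i ∈ J, (μ (ball (x i) a)).toReal ≤ ∫ y, ∑ i ∈ J, tent a (x i) y ∂μ := by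
    rw [integral_finsetSum J fun i hi => integrable_tent ha (hfin hμ i hi), Finset.mul_sum]
    exact Finset.sum_le_sum fun i hi => mul_measure_ball_le_integral_tent ha (hfin hμ i hi)
  have hνψ : ∫ y, ∑ i ∈ J, tent a (x i) y ∂ν ≤ a * ∑ i ∈ J, (ν (ball (x i) (2 * a))).toReal := by
    rw [integral_finsetSum J fun i hi => integrable_tent ha (hfin hν i hi), Finset.mul_sum]
    exact Finset.sum_le_sum fun i hi => integral_tent_le ha (hfin hν i hi)
  rw [Finset.sum_sub_distrib, mul_sub]
  linarith [le_abs_self ((∫ y, ∑ i ∈ J, tent a (x i) y ∂μ) - ∫ y, ∑ i ∈ J, tent a (x i) y ∂ν),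
    abs_sub_integral_le_Fdist hR hμ hν hψ]

section MinimizingPlane

variable {d n : ℕ} [Nontrivial (Euc d)] {μ : Measure (Euc d)} [IsLocallyFiniteMeasure μ]
  {z : Euc d} {r c : ℝ} {L : AffineSubspace ℝ (Euc d)}

/-- Testing `ν - μ` with a tent of height `0.1 r` at a point `q ∈ L ∩ 0.9B` gives
`ν(B(q, 0.1r)) ≤ 23 μ(3.3B)`; balls of radius `ρ` have at most `(20ρ/r)^n` times this `ν`-mass. -/
theorem toReal_flatMeasure_ball_le (hr : 0 < r) (hL : IsAffinePlane n L)
    (hLz : ((L : Set (Euc d)) ∩ ball z (0.9 * r)).Nonempty) (hμ : 0 < μ (ball z (3.3 * r)))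
    (hmin : alphaVal n μ z (1.1 * r) c L = alphaCoef n μ z (1.1 * r)) (x : Euc d) {ρ : ℝ}
    (hρ : 0 ≤ ρ) :
    (flatMeasure n c L (ball x ρ)).toReal ≤
      23 * (20 * ρ / r) ^ n * (μ (ball z (3.3 * r))).toReal := by
  obtain ⟨q, hqL, hq⟩ := hLz
  set ν := flatMeasure n c L
  set N := (μ (ball z (3.3 * r))).toReal
  have hμN : ∀ {y : Euc d} {s : ℝ}, ball y s ⊆ ball z (3.3 * r) → (μ (ball y s)).toReal ≤ N :=
    fun h => ENNReal.toReal_mono measure_ball_lt_top.ne (measure_mono h)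
  have hF : Fdist (ball z (1.1 * r)) μ ν ≤ 2 * (1.1 * r) * N := by
    have h33 : 3 * (1.1 * r) = 3.3 * r := by ring
    refine (Fdist_flatMeasure_le_of_alphaVal_eq_alphaCoef (by positivity) hL (h33 ▸ hμ)
      (h33 ▸ measure_ball_lt_top.ne) hmin).trans ?_
    gcongr
    exact hμN (ball_subset_ball (by linarith))
  have htest := mul_sum_measure_ball_sub_le_Fdist (μ := ν) (ν := μ) (z := z) (R := 1.1 * r)
    (by positivity) (flatMeasure_ball_lt_top hL z _).ne measure_ball_lt_top.ne {()} (fun _ => q)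
    (a := 0.1 * r) (by positivity) (by simp) fun _ _ =>
      closedBall_subset_ball' (by linarith [mem_ball.1 hq])
  rw [Finset.sum_singleton, ← Fdist_comm] at htest
  have hμq : 0.1 * r * (μ (ball q (2 * (0.1 * r)))).toReal ≤ 0.1 * r * N :=
    mul_le_mul_of_nonneg_left (hμN (ball_subset_ball' (by linarith [mem_ball.1 hq])))
      (by positivity)
  have hνq : (ν (ball q (0.1 * r))).toReal ≤ 23 * N := by
    refine le_of_mul_le_mul_left ?_ (by positivity : 0 < 0.1 * r)
    linarith
  calc (ν (ball x ρ)).toReal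
      ≤ (ENNReal.ofReal ((2 * ρ / (0.1 * r)) ^ n) * ν (ball q (0.1 * r))).toReal :=
        ENNReal.toReal_mono (ENNReal.mul_ne_top ENNReal.ofReal_ne_top
          (flatMeasure_ball_lt_top hL _ _).ne) (flatMeasure_ball_le hL.2 hqL (by positivity) x ρ)
    _ = (20 * ρ / r) ^ n * (ν (ball q (0.1 * r))).toReal := by
        rw [ENNReal.toReal_mul, ENNReal.toReal_ofReal (by positivity)]
        congr 2
        field_simp
        ring
    _ ≤ 23 * (20 * ρ / r) ^ n * N := by
        rw [mul_comm 23, mul_assoc]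
        gcongr

theorem toReal_flatMeasure_ball_le_half (hr : 0 < r) (hL : IsAffinePlane n L)
    (hLz : ((L : Set (Euc d)) ∩ ball z (0.9 * r)).Nonempty) (hμ : 0 < μ (ball z (3.3 * r)))
    (hmin : alphaVal n μ z (1.1 * r) c L = alphaCoef n μ z (1.1 * r)) {C₀ c₁ γ : ℝ}
    (hC₀ : 0 < C₀) (hc₁ : 0 < c₁)
    (hN : (μ (ball z (3.3 * r))).toReal ≤ C₀ * (μ (ball z r)).toReal) (hγ : 0 < γ)
    (hγ₀ : γ ≤ c₁ / (46 * C₀ * 40 ^ n)) {y : Euc d}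
    (hdens : c₁ * γ⁻¹ * density n μ z r ≤ density n μ y (4 * γ * r)) :
    (flatMeasure n c L (ball y (8 * γ * r))).toReal ≤ (μ (ball y (4 * γ * r))).toReal / 2 := by
  set M := (μ (ball z r)).toReal
  set m := (μ (ball y (4 * γ * r))).toReal
  have hflat := toReal_flatMeasure_ball_le hr hL hLz hμ hmin y (ρ := 8 * γ * r) (by positivity)
  rw [show 20 * (8 * γ * r) / r = 40 * (4 * γ) by field_simp; ring, mul_pow] at hflat
  have hm : c₁ * γ⁻¹ * ((4 * γ) ^ n * M) ≤ m := by
    rw [density, density, le_div_iff₀ (by positivity)] at hdens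
    calc c₁ * γ⁻¹ * ((4 * γ) ^ n * M) = c₁ * γ⁻¹ * (M / r ^ n) * (4 * γ * r) ^ n := by
          rw [mul_pow (4 * γ) r]
          field_simp
      _ ≤ m := hdens
  have hγ' : 46 * C₀ * 40 ^ n * γ ≤ c₁ := by
    rwa [le_div_iff₀' (by positivity)] at hγ₀
  calc (flatMeasure n c L (ball y (8 * γ * r))).toReal
      ≤ 23 * (40 ^ n * (4 * γ) ^ n) * (C₀ * M) := hflat.trans (by gcongr)
    _ = (46 * C₀ * 40 ^ n * γ) * γ⁻¹ * ((4 * γ) ^ n * M) / 2 := by field_simp; ring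
    _ ≤ c₁ * γ⁻¹ * ((4 * γ) ^ n * M) / 2 := by gcongr
    _ ≤ m / 2 := by gcongr

theorem two_mul_sum_measure_ball_le_Fdist (hr : 0 < r) (hL : IsAffinePlane n L)
    (hLz : ((L : Set (Euc d)) ∩ ball z (0.9 * r)).Nonempty) (hμ : 0 < μ (ball z (3.3 * r)))
    (hmin : alphaVal n μ z (1.1 * r) c L = alphaCoef n μ z (1.1 * r)) {C₀ c₁ γ : ℝ}
    (hC₀ : 0 < C₀) (hc₁ : 0 < c₁)
    (hN : (μ (ball z (3.3 * r))).toReal ≤ C₀ * (μ (ball z r)).toReal) (hγ : 0 < γ)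
    (hγ₀ : γ ≤ c₁ / (46 * C₀ * 40 ^ n)) (hγ₁ : γ ≤ 1 / 100) {ι : Type*} (J : Finset ι)
    (x : ι → Euc d) (hx : ∀ i ∈ J, x i ∈ ball z r)
    (hdisj : (J : Set ι).PairwiseDisjoint fun i => ball (x i) (2 * (4 * γ * r)))
    (hdens : ∀ i ∈ J, c₁ * γ⁻¹ * density n μ z r ≤ density n μ (x i) (4 * γ * r)) :
    2 * γ * r * ∑ i ∈ J, (μ (ball (x i) (4 * γ * r))).toReal ≤
      Fdist (ball z (1.1 * r)) μ (flatMeasure n c L) := by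
  have htest := mul_sum_measure_ball_sub_le_Fdist (μ := μ) (ν := flatMeasure n c L) (z := z)
    (R := 1.1 * r) (by positivity) measure_ball_lt_top.ne (flatMeasure_ball_lt_top hL z _).ne
    J x (by positivity) hdisj fun i hi =>
      closedBall_subset_ball' (by nlinarith [mem_ball.1 (hx i hi)])
  refine le_trans ?_ htest
  rw [Finset.mul_sum, Finset.mul_sum]
  refine Finset.sum_le_sum fun i hi => ?_
  have hhalf := toReal_flatMeasure_ball_le_half hr hL hLz hμ hmin hC₀ hc₁ hN hγ hγ₀ (hdens i hi)
  rw [show 8 * γ * r = 2 * (4 * γ * r) by ring] at hhalf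
  nlinarith [mul_pos hγ hr]

end MinimizingPlane

theorem exists_finset_toReal_lt_sum_toReal {ι : Type*} {f : ι → ℝ≥0∞} (hf : ∀ i, f i ≠ ⊤)
    {a : ℝ≥0∞} (h : a < ∑' i, f i) :
    ∃ J : Finset ι, a.toReal < ∑ i ∈ J, (f i).toReal := by
  rw [ENNReal.tsum_eq_iSup_sum] at h
  obtain ⟨J, hJ⟩ := lt_iSup_iff.1 h
  refine ⟨J, ?_⟩
  rw [← ENNReal.toReal_sum fun i _ => hf i]
  exact ENNReal.toReal_strict_mono (ENNReal.sum_ne_top.2 fun i _ => hf i) hJ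

/-- If a ball `B` admits a family of small dense balls as in the
unbalanced alternative of the balanced-balls lemma (with constant `c₁`), then
`α_μ(1.1B) > Cγ`, where `γ₀, C` depend only on `n, d, C₀, c₁`. -/
theorem statement14 (n d : ℕ) (hn : 1 ≤ n) (hnd : n ≤ d) (C₀ c₁ : ℝ)
    (hC₀ : 1 ≤ C₀) (hc₁ : 0 < c₁) :
    ∃ γ₀ ∈ Ioo (0 : ℝ) 1, ∃ C > (0 : ℝ),
      ∀ (μ : Measure (Euc d)), IsLocallyFiniteMeasure μ →
      ∀ (z : Euc d) (r : ℝ), 0 < r → 0 < μ (ball z r) →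
        μ (ball z (3.3 * r)) ≤ ENNReal.ofReal C₀ * μ (ball z r) →
      ∀ (c : ℝ) (L : AffineSubspace ℝ (Euc d)), 0 ≤ c → IsAffinePlane n L →
        ((L : Set (Euc d)) ∩ ball z (0.9 * r)).Nonempty →
        alphaVal n μ z (1.1 * r) c L = alphaCoef n μ z (1.1 * r) →
      ∀ γ : ℝ, 0 < γ → γ ≤ γ₀ →
      ∀ (ι : Type), Countable ι →
      ∀ x : ι → Euc d,
        (∀ i, x i ∈ ball z r) →
        (Pairwise fun i j =>
          Disjoint (ball (x i) (10 * (4 * γ * r))) (ball (x j) (10 * (4 * γ * r)))) →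
        ENNReal.ofReal c₁ * μ (ball z r) ≤ ∑' i, μ (ball (x i) (4 * γ * r)) →
        (∀ i, c₁ * γ⁻¹ * density n μ z r ≤ density n μ (x i) (4 * γ * r)) →
        C * γ < alphaCoef n μ z (1.1 * r) := by
  have : Nonempty (Fin d) := ⟨⟨0, by omega⟩⟩
  have hC₀' : 0 < C₀ := by linarith
  refine ⟨min (1 / 100) (c₁ / (46 * C₀ * 40 ^ n)),
    ⟨by positivity, (min_le_left _ _).trans_lt (by norm_num)⟩, c₁ / (2 * C₀), by positivity, ?_⟩
  intro μ _ z r hr hμ hdoubling c L _ hL hLz hmin γ hγ hγ₀ ι _ x hx hdisj hsum hdens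
  set M := (μ (ball z r)).toReal
  set N := (μ (ball z (3.3 * r))).toReal
  have hN : N ≤ C₀ * M := ENNReal.toReal_le_of_le_ofReal (by positivity) <| hdoubling.trans_eq <|
    by rw [ENNReal.ofReal_mul hC₀'.le, ENNReal.ofReal_toReal measure_ball_lt_top.ne]
  have hμN : 0 < μ (ball z (3.3 * r)) :=
    hμ.trans_le (measure_mono (ball_subset_ball (by linarith)))
  have hM : 0 < M := ENNReal.toReal_pos hμ.ne' measure_ball_lt_top.ne
  obtain ⟨J, hJ⟩ := exists_finset_toReal_lt_sum_toReal (fun i => measure_ball_lt_top.ne) <|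
    (ENNReal.mul_lt_mul_left hμ.ne' measure_ball_lt_top.ne
      ((ENNReal.ofReal_lt_ofReal_iff hc₁).2 (half_lt_self hc₁))).trans_le hsum
  rw [ENNReal.toReal_mul, ENNReal.toReal_ofReal (by positivity)] at hJ
  have hF := two_mul_sum_measure_ball_le_Fdist hr hL hLz hμN hmin hC₀' hc₁ hN hγ
    (hγ₀.trans (min_le_right _ _)) (hγ₀.trans (min_le_left _ _)) J x (fun i _ => hx i)
    (fun i _ j _ hij => (hdisj hij).mono (ball_subset_ball (by nlinarith))
      (ball_subset_ball (by nlinarith))) fun i _ => hdens i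
  rw [← hmin, alphaVal, show 3 * (1.1 * r) = 3.3 * r by ring, lt_div_iff₀
    (mul_pos (by positivity) (ENNReal.toReal_pos hμN.ne' measure_ball_lt_top.ne))]
  calc c₁ / (2 * C₀) * γ * (1.1 * r * N) ≤ c₁ / (2 * C₀) * γ * (1.1 * r * (C₀ * M)) := by
        gcongr
    _ < 2 * γ * r * (c₁ / 2 * M) := by
        field_simp
        nlinarith [mul_pos (mul_pos hγ hr) (mul_pos hc₁ hM)]
    _ ≤ 2 * γ * r * ∑ i ∈ J, (μ (ball (x i) (4 * γ * r))).toReal := by gcongr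
    _ ≤ _ := hF

end
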